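/- arXiv:1308.5149 — 6 statements merged into one kernel-verified Lean document; each statement's English description precedes it below -/
import Mathlib

section
/- Let T be an M×N complex matrix with M ≤ N that is full spark (every M columns of T are linearly independent). If M² ≥ N and 2M > N, then the Khatri-Rao product C = T̄ ⊙ T (the M²×N matrix whose j-th column is the Kronecker product of the conjugate of the j-th column of T with the j-th column of T) has full column rank N. -/
open Matrix

/-- Khatri-Rao product `T̄ ⊙ T`: the `M²×N` matrix whose `j`-th column is the
Kronecker product of the conjugate of the `j`-th column of `T` with the `j`-th column of `T`. -/
def khatriRaoConj {M N : ℕ} (T : Matrix (Fin M) (Fin N) ℂ) :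
    Matrix (Fin M × Fin M) (Fin N) ℂ :=
  fun p j => (starRingEnd ℂ) (T p.1 j) * T p.2 j

/-- `T` is full spark: every `M` columns of the `M×N` matrix `T` are linearly independent. -/
def FullSpark {M N : ℕ} (T : Matrix (Fin M) (Fin N) ℂ) : Prop :=
  ∀ S : Finset (Fin N), S.card = M →
    LinearIndependent ℂ (fun j : S => T.transpose j.1)

/-!
Suppose `∑ⱼ gⱼ (t̄ⱼ ⊗ tⱼ) = 0` and fix `j₀`. Put `j₀` in a set `B` of `M` columns; its complement `A`
has `N - M < M` elements, so `{j₀} ∪ A` is a set of at most `M` columns, hence independent, and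
there is a functional `φ` killing `tⱼ` for `j ∈ A` but not `t_{j₀}`. Contracting the second tensor
factor with `φ` gives `∑ⱼ gⱼ φ(tⱼ) t̄ⱼ = 0`; its conjugate is a relation among the `tⱼ` supported on
the `M` independent columns `B`, so `g_{j₀} φ(t_{j₀}) = 0` and `g_{j₀} = 0`.
-/

open Finset

theorem LinearIndepOn.coeff_eq_zero_of_sum_eq_zero {ι K V : Type*} [Fintype ι] [Ring K]
    [AddCommGroup V] [Module K V] {v : ι → V} {s : Finset ι} (hv : LinearIndepOn K v (s : Set ι))
    {c : ι → K} (hc : ∀ i ∉ s, c i = 0) (h : ∑ i, c i • v i = 0) : ∀ i ∈ s, c i = 0 := by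
  refine linearIndepOn_iff'.1 hv s c subset_rfl ?_
  rwa [Finset.sum_subset (subset_univ s) fun i _ hi => by rw [hc i hi, zero_smul]]

theorem LinearIndepOn.exists_dual_of_insert {ι K V : Type*} [Field K] [AddCommGroup V]
    [Module K V] {v : ι → V} {s : Set ι} {a : ι} (hv : LinearIndepOn K v (insert a s))
    (ha : a ∉ s) : ∃ φ : Module.Dual K V, φ (v a) ≠ 0 ∧ ∀ i ∈ s, φ (v i) = 0 := by
  obtain ⟨φ, hφa, hφs⟩ :=
    Submodule.exists_dual_map_eq_bot_of_notMem ((linearIndepOn_insert ha).1 hv).2 inferInstance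
  refine ⟨φ, hφa, fun i hi => (Submodule.mem_bot K).1 ?_⟩
  exact hφs ▸ Submodule.mem_map_of_mem (Submodule.subset_span ⟨i, hi, rfl⟩)

namespace FullSpark

variable {M N : ℕ} {T : Matrix (Fin M) (Fin N) ℂ}

theorem linearIndepOn_of_card_le (hMN : M ≤ N) (hT : FullSpark T) {S : Finset (Fin N)}
    (hS : #S ≤ M) : LinearIndepOn ℂ Tᵀ (S : Set (Fin N)) := by
  obtain ⟨S', hSS', -, hS'⟩ := exists_subsuperset_card_eq (subset_univ S) hS (by simpa using hMN)
  exact LinearIndepOn.mono (hT S' hS') (coe_subset.2 hSS')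

end FullSpark

theorem khatriRaoConj_contract {M N : ℕ} {T : Matrix (Fin M) (Fin N) ℂ} {g : Fin N → ℂ}
    (hg : ∑ j, g j • (khatriRaoConj T)ᵀ j = 0) (φ : Module.Dual ℂ (Fin M → ℂ)) :
    ∑ j, star (g j * φ (Tᵀ j)) • Tᵀ j = 0 := by
  ext p
  have hpq (q : Fin M) : ∑ j, g j * (star (T p j) * T q j) = 0 := by
    simpa [khatriRaoConj, Finset.sum_apply] using congrFun hg (p, q)
  have hφ : ∑ j, g j * φ (Tᵀ j) * star (T p j) = 0 := by
    simp_rw [LinearMap.pi_apply_eq_sum_univ φ (Tᵀ _), Finset.mul_sum, Finset.sum_mul]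
    rw [Finset.sum_comm]
    refine Finset.sum_eq_zero fun q _ => ?_
    calc _ = (∑ j, g j * (star (T p j) * T q j)) * φ (fun j => if q = j then 1 else 0) := by
          rw [Finset.sum_mul]
          refine Finset.sum_congr rfl fun j _ => ?_
          rw [transpose_apply, smul_eq_mul]
          ring
      _ = 0 := by rw [hpq q, zero_mul]
  simpa [Finset.sum_apply, mul_comm] using congrArg star hφ

theorem stmt0_general {M N : ℕ} (T : Matrix (Fin M) (Fin N) ℂ)
    (hMN : M ≤ N) (hfs : FullSpark T)
    (h2 : N < 2 * M) :
    LinearIndependent ℂ (fun j : Fin N => (khatriRaoConj T).transpose j) := by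
  rw [Fintype.linearIndependent_iff]
  intro g hg j₀
  obtain ⟨B, hj₀, -, hB⟩ :=
    exists_subsuperset_card_eq (n := M) (singleton_subset_iff.2 (mem_univ j₀))
      (by rw [card_singleton]; omega) (by simpa using hMN)
  have hj₀B : j₀ ∈ B := singleton_subset_iff.1 hj₀
  have hBc : LinearIndepOn ℂ Tᵀ (insert j₀ (Bᶜ : Finset (Fin N)) : Set (Fin N)) := by
    rw [← coe_insert]
    refine hfs.linearIndepOn_of_card_le hMN ((card_insert_le _ _).trans ?_)
    rw [card_compl, Fintype.card_fin, hB]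
    omega
  obtain ⟨φ, hφj₀, hφBc⟩ := hBc.exists_dual_of_insert (by simpa using hj₀B)
  have hcoeff := LinearIndepOn.coeff_eq_zero_of_sum_eq_zero (hfs B hB)
    (fun j hj => by rw [hφBc j (by simpa using hj), mul_zero, star_zero])
    (khatriRaoConj_contract hg φ) j₀ hj₀B
  simpa [hφj₀] using hcoeff

theorem stmt0 {M N : ℕ} (T : Matrix (Fin M) (Fin N) ℂ)
    (hMN : M ≤ N) (hfs : FullSpark T)
    (h1 : N ≤ M ^ 2) (h2 : N < 2 * M) :
    LinearIndependent ℂ (fun j : Fin N => (khatriRaoConj T).transpose j) :=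
  stmt0_general T hMN hfs h2
end

section
/- Let T be an M×N complex full spark matrix (M ≤ N) and let x ∈ ℂ^N with (T̄ ⊙ T)x = 0. If the number of nonzero entries of x is at most M, then x = 0. -/
/-!
Restrict to the support `S` of `x`; by full spark the columns `t_j`, `j ∈ S`, are linearly
independent. Reading the Khatri–Rao equation row block by row block,
`∑_{j ∈ S} (x_j · conj (T p j)) t_j = 0` for every row index `p`, so independence gives
`x_j · conj (T p j) = 0` for all `p`; since no column is zero, `x_j = 0`.
-/

open Matrix

theorem LinearIndependent.eq_zero_of_forall_sum_mul_star_smul_eq_zero {ι m K : Type*}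
    [Fintype ι] [Field K] [StarRing K] {v : ι → m → K} (hv : LinearIndependent K v)
    {c : ι → K} (h : ∀ p, ∑ j, (c j * star (v j p)) • v j = 0) : c = 0 := by
  funext j
  obtain ⟨p, hp⟩ : ∃ p, v j p ≠ 0 := Function.ne_iff.mp (hv.ne_zero j)
  have hcoeff : c j * star (v j p) = 0 := Fintype.linearIndependent_iff.mp hv _ (h p) j
  simpa [hp] using hcoeff

theorem FullSpark.linearIndependent_of_card_le {M N : ℕ} {T : Matrix (Fin M) (Fin N) ℂ}
    (hfs : FullSpark T) (hMN : M ≤ N) {S : Finset (Fin N)} (hS : S.card ≤ M) :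
    LinearIndependent ℂ (fun j : S => Tᵀ j.1) := by
  obtain ⟨S', hSS', hS'⟩ := Finset.exists_superset_card_eq hS (by simpa using hMN)
  exact (hfs S' hS').comp (Set.inclusion hSS') (Set.inclusion_injective hSS')

theorem khatriRaoConj_mulVec_apply {M N : ℕ} (T : Matrix (Fin M) (Fin N) ℂ) {x : Fin N → ℂ}
    {S : Finset (Fin N)} (hS : ∀ j ∉ S, x j = 0) (p q : Fin M) :
    (khatriRaoConj T *ᵥ x) (p, q) = ∑ j : S, (x j * star (T p j)) * T q j := by
  rw [Finset.sum_coe_sort S fun j => x j * star (T p j) * T q j, mulVec, dotProduct,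
    ← Finset.sum_subset (Finset.subset_univ S) fun j _ hj => by simp [hS j hj]]
  exact Finset.sum_congr rfl fun j _ => by simp only [khatriRaoConj, starRingEnd_apply]; ring

theorem stmt2 {M N : ℕ} (T : Matrix (Fin M) (Fin N) ℂ)
    (hMN : M ≤ N) (hfs : FullSpark T)
    (x : Fin N → ℂ) (hx : (khatriRaoConj T).mulVec x = 0)
    (hsupp : {j | x j ≠ 0}.ncard ≤ M) :
    x = 0 := by
  classical
  set S := Finset.univ.filter fun j => x j ≠ 0
  have hxS : ∀ j ∉ S, x j = 0 := by simp [S]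
  have hS : S.card ≤ M := by
    rwa [← Set.ncard_coe_finset, Finset.coe_filter_univ]
  have hxS_zero : (fun j : S => x j) = 0 :=
    (hfs.linearIndependent_of_card_le hMN hS).eq_zero_of_forall_sum_mul_star_smul_eq_zero
      fun p => funext fun q => by
        simpa [khatriRaoConj_mulVec_apply T hxS] using congrFun hx (p, q)
  funext j
  by_cases hj : j ∈ S
  · exact congrFun hxS_zero ⟨j, hj⟩
  · exact hxS j hj
end

section
/- Let T be an M×N complex full spark matrix (M ≤ N), let x ∈ ℂ^N be a vector whose support Ω has size strictly greater than M, and define h_i ∈ ℂ^N by (h_i)_j = T_{ij} x_j for 1 ≤ i ≤ M. Then the vectors h_1, …, h_M are linearly independent. -/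
/-!
If `∑ᵢ gᵢ hᵢ = 0` then `(gᵀT)ⱼ xⱼ = 0` for every `j`, so the row vector `gᵀT` vanishes on the
support of `x`. That support contains `M` columns of `T`, which by full spark are a basis of `ℂᴹ`;
a vector with zero dot product against a basis is zero, hence `g = 0`.
-/

open Matrix

namespace Matrix

theorem eq_zero_of_dotProduct_eq_zero_of_span_eq_top {R n ι : Type*} [CommSemiring R]
    [Fintype n] [DecidableEq n] {v : ι → n → R} (hv : Submodule.span R (Set.range v) = ⊤)
    {g : n → R} (hg : ∀ i, g ⬝ᵥ v i = 0) : g = 0 := by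
  have : dotProductEquiv R n g = 0 := LinearMap.ext_on_range hv (by simpa using hg)
  simpa using this

theorem eq_zero_of_vecMul_eq_zero_on_linearIndependent_cols {K m n : Type*} [Field K]
    [Fintype m] [DecidableEq m] {A : Matrix m n K} {S : Finset n}
    (hcard : S.card = Fintype.card m)
    (hS : LinearIndependent K fun j : S => Aᵀ j) {g : m → K} (hg : ∀ j ∈ S, (g ᵥ* A) j = 0) :
    g = 0 :=
  eq_zero_of_dotProduct_eq_zero_of_span_eq_top
    (hS.span_eq_top_of_card_eq_finrank' (by simpa using hcard)) fun j => hg j j.2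

end Matrix

theorem Set.exists_finset_subset_card_eq {α : Type*} {s : Set α} (hs : s.Finite) {n : ℕ}
    (hn : n ≤ s.ncard) : ∃ S : Finset α, ↑S ⊆ s ∧ S.card = n := by
  obtain ⟨t, hts, rfl⟩ := Set.exists_subset_card_eq hn
  exact ⟨(hs.subset hts).toFinset, by simpa using hts,
    by simp [Set.ncard_eq_toFinset_card _ (hs.subset hts)]⟩

theorem vecMul_mul_eq_zero_of_sum_smul_eq_zero {R m n : Type*} [CommSemiring R] [Fintype m]
    {A : Matrix m n R} {x : n → R} {g : m → R} (hg : ∑ i, g i • (fun j => A i j * x j) = 0)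
    (j : n) : (g ᵥ* A) j * x j = 0 := by
  simpa [vecMul, dotProduct, Finset.sum_mul, mul_assoc] using congrFun hg j

theorem FullSpark.linearIndependent_mul_of_le_ncard_support {M N : ℕ}
    {T : Matrix (Fin M) (Fin N) ℂ} (hT : FullSpark T) {x : Fin N → ℂ}
    (hx : M ≤ {j | x j ≠ 0}.ncard) :
    LinearIndependent ℂ fun i j => T i j * x j := by
  rw [Fintype.linearIndependent_iff]
  intro g hg
  obtain ⟨S, hSx, hSM⟩ := Set.exists_finset_subset_card_eq (Set.toFinite _) hx
  have hvanish : ∀ j ∈ S, (g ᵥ* T) j = 0 := fun j hj =>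
    (mul_eq_zero.mp (vecMul_mul_eq_zero_of_sum_smul_eq_zero hg j)).resolve_right (hSx hj)
  simp [eq_zero_of_vecMul_eq_zero_on_linearIndependent_cols (by simpa using hSM) (hT S hSM) hvanish]

theorem stmt3_general {M N : ℕ} (T : Matrix (Fin M) (Fin N) ℂ)
    (hfs : FullSpark T)
    (x : Fin N → ℂ) (hsupp : M < {j | x j ≠ 0}.ncard)
    (h : Fin M → Fin N → ℂ) (hh : ∀ i j, h i j = T i j * x j) :
    LinearIndependent ℂ h := by
  obtain rfl : h = fun i j => T i j * x j := funext₂ hh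
  exact hfs.linearIndependent_mul_of_le_ncard_support hsupp.le

theorem stmt3 {M N : ℕ} (T : Matrix (Fin M) (Fin N) ℂ)
    (hMN : M ≤ N) (hfs : FullSpark T)
    (x : Fin N → ℂ) (hsupp : M < {j | x j ≠ 0}.ncard)
    (h : Fin M → Fin N → ℂ) (hh : ∀ i j, h i j = T i j * x j) :
    LinearIndependent ℂ h :=
  stmt3_general T hfs x hsupp h hh
end

section
/- Let T be an M×N complex full spark matrix with M ≥ 2 and M ≤ N. Then the spark of the Khatri-Rao product Φ = T̄ ⊙ T satisfies spark(Φ) ≥ 2M; consequently, any vector r with at most K_f < M nonzero entries is the unique K_f-sparse solution of Φ r = z for z = Φ r. -/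
open Matrix

/-!
Column `j` of `Φ` is the rank-one matrix `conj(t_j) t_jᵀ`, so a relation `∑ c_j φ_j = 0`
gives `∑ c_j f(conj t_j) t_j = 0` for every linear functional `f`. Given `j₀` in the support `S`
(`|S| < 2M`), pick `Q ⊆ S` with `j₀ ∈ Q`, `|Q| ≤ M` and `|S \ Q| < M`. Since the conjugated
columns in `Q` are independent, some `f` kills `conj t_j` for `j ∈ Q \ {j₀}` but not
`conj t_{j₀}`; the relation then involves at most `M` columns `t_j`, which are independent,
so `c_{j₀} = 0`.
-/

open Finset

theorem LinearIndepOn.star {K V ι : Type*} [Field K] [StarRing K] [AddCommGroup V] [Module K V]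
    [StarAddMonoid V] [StarModule K V] {v : ι → V} {s : Set ι} (h : LinearIndepOn K v s) :
    LinearIndepOn K (star v) s :=
  h.map_of_injective_injectiveₛ Star.star (starAddEquiv : V ≃+ V).toAddMonoidHom star_injective
    star_injective fun r m => by simp [star_smul]

theorem eq_zero_of_forall_dual_sum_smul_eq_zero {K V W ι : Type*} [Field K] [AddCommGroup V]
    [Module K V] [AddCommGroup W] [Module K W] {v : ι → V} {w : ι → W} {M : ℕ}
    (hv : ∀ A : Finset ι, #A ≤ M → LinearIndepOn K v A)
    (hw : ∀ A : Finset ι, #A ≤ M → LinearIndepOn K w A)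
    {S : Finset ι} (hS : #S < 2 * M) {c : ι → K}
    (hc : ∀ f : Module.Dual K W, ∑ j ∈ S, (c j * f (w j)) • v j = 0) :
    ∀ j ∈ S, c j = 0 := by
  classical
  intro j₀ hj₀
  have hS₀ : 0 < #S := card_pos.mpr ⟨j₀, hj₀⟩
  obtain ⟨Q, hj₀Q, hQS, hQ⟩ :=
    exists_subsuperset_card_eq (singleton_subset_iff.mpr hj₀) (n := min #S M)
      (by simp only [card_singleton]; omega) (min_le_left _ _)
  have hj₀Q : j₀ ∈ Q := singleton_subset_iff.mp hj₀Q
  have hspan : w j₀ ∉ Submodule.span K (w '' ↑(Q.erase j₀)) := by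
    rw [((hw Q (by omega)).mono (by simp)).notMem_span_iff]
    simpa [hj₀Q] using hw Q (by omega)
  obtain ⟨f, hf₀, hf⟩ := Submodule.exists_dual_map_eq_bot_of_notMem hspan inferInstance
  have hfQ : ∀ j ∈ Q.erase j₀, f (w j) = 0 := fun j hj =>
    (Submodule.mem_bot K).mp (hf ▸ Submodule.mem_map_of_mem (Submodule.subset_span ⟨j, hj, rfl⟩))
  set A := insert j₀ (S \ Q)
  have hA : #A ≤ M := (card_insert_le _ _).trans (by rw [card_sdiff_of_subset hQS]; omega)
  have hAS : A ⊆ S := insert_subset hj₀ sdiff_subset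
  have hsum : ∑ j ∈ A, (c j * f (w j)) • v j = 0 := by
    refine (sum_subset hAS fun j hjS hjA => ?_).trans (hc f)
    have : j ∈ Q.erase j₀ := by
      simp only [A, mem_insert, mem_sdiff, not_or, not_and, not_not] at hjA
      exact mem_erase.mpr ⟨hjA.1, hjA.2 hjS⟩
    simp [hfQ j this]
  have hc₀ := linearIndepOn_finset_iff.mp (hv A hA) _ hsum j₀ (mem_insert_self _ _)
  exact (mul_eq_zero.mp hc₀).resolve_right hf₀

section FullSpark

variable {M N : ℕ}

theorem FullSpark.linearIndepOn_of_card_le_s7 {T : Matrix (Fin M) (Fin N) ℂ} (hfs : FullSpark T)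
    (hMN : M ≤ N) {A : Finset (Fin N)} (hA : #A ≤ M) : LinearIndepOn ℂ T.col A := by
  obtain ⟨B, hAB, hB⟩ := exists_superset_card_eq hA (by simpa using hMN)
  exact LinearIndepOn.mono (hfs B hB) (coe_subset.mpr hAB)

theorem sum_smul_dual_star_smul_col_eq_zero {T : Matrix (Fin M) (Fin N) ℂ} {S : Finset (Fin N)}
    {c : Fin N → ℂ} (hc : ∑ j ∈ S, c j • (khatriRaoConj T).col j = 0)
    (f : Module.Dual ℂ (Fin M → ℂ)) : ∑ j ∈ S, (c j * f (star (T.col j))) • T.col j = 0 := by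
  funext k
  have hk : ∀ i, ∑ j ∈ S, c j * (starRingEnd ℂ (T i j) * T k j) = 0 := fun i => by
    simpa [khatriRaoConj, Finset.sum_apply] using congrFun hc (i, k)
  set e : Fin M → ℂ := fun i => f fun i' => if i = i' then 1 else 0
  calc (∑ j ∈ S, (c j * f (star (T.col j))) • T.col j) k
      = ∑ j ∈ S, ∑ i, e i * (c j * (starRingEnd ℂ (T i j) * T k j)) := by
        rw [Finset.sum_apply]
        refine sum_congr rfl fun j _ => ?_
        rw [Pi.smul_apply, smul_eq_mul, LinearMap.pi_apply_eq_sum_univ f, mul_sum, sum_mul]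
        refine sum_congr rfl fun i _ => ?_
        simp only [e, col_apply, Pi.star_apply, Complex.star_def, smul_eq_mul]
        ring
    _ = 0 := by rw [sum_comm]; simp [← mul_sum, hk]

theorem khatriRaoConj_linearIndepOn {T : Matrix (Fin M) (Fin N) ℂ} (hfs : FullSpark T)
    (hMN : M ≤ N) {S : Finset (Fin N)} (hS : #S < 2 * M) :
    LinearIndepOn ℂ (khatriRaoConj T).col S :=
  linearIndepOn_finset_iff.mpr fun _ hc =>
    eq_zero_of_forall_dual_sum_smul_eq_zero (fun _ hA => hfs.linearIndepOn_of_card_le_s7 hMN hA)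
      (fun _ hA => (hfs.linearIndepOn_of_card_le_s7 hMN hA).star) hS
      (sum_smul_dual_star_smul_col_eq_zero hc)

end FullSpark

theorem Matrix.eq_of_mulVec_eq_of_ncard_support_le {K m n : Type*} [Field K] [Fintype n]
    {A : Matrix m n K} {k : ℕ} (hA : ∀ S : Finset n, #S ≤ 2 * k → LinearIndepOn K A.col S)
    {r r' : n → K} (hr : {j | r j ≠ 0}.ncard ≤ k) (hr' : {j | r' j ≠ 0}.ncard ≤ k)
    (h : A *ᵥ r' = A *ᵥ r) : r' = r := by
  classical
  set S := univ.filter fun j => (r' - r) j ≠ 0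
  have hS : #S ≤ 2 * k := by
    have hsub : S ⊆ (univ.filter fun j => r' j ≠ 0) ∪ univ.filter fun j => r j ≠ 0 := by
      intro j
      simp only [S, mem_filter, mem_union, mem_univ, true_and, Pi.sub_apply]
      contrapose!
      simp +contextual
    have := (card_le_card hsub).trans (card_union_le _ _)
    simp only [Set.ncard_eq_toFinset_card', Set.toFinset_ofPred] at hr hr'
    omega
  have hsum : ∑ j ∈ S, (r' - r) j • A.col j = 0 := by
    simp only [S]
    rw [sum_filter_of_ne (p := fun j => (r' - r) j ≠ 0) fun j _ hj => left_ne_zero_of_smul hj]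
    funext i
    simpa [mulVec, dotProduct, Finset.sum_apply, mul_comm, mul_sub, sum_sub_distrib, sub_eq_zero]
      using congrFun h i
  funext j
  by_cases hj : j ∈ S
  · exact sub_eq_zero.mp (linearIndepOn_finset_iff.mp (hA S hS) _ hsum j hj)
  · simpa [S, sub_eq_zero] using hj

theorem stmt7_general {M N : ℕ} (T : Matrix (Fin M) (Fin N) ℂ)
    (hMN : M ≤ N) (hfs : FullSpark T) :
    (∀ S : Finset (Fin N), S.card < 2 * M →
      LinearIndependent ℂ (fun j : S => (khatriRaoConj T).transpose j.1)) ∧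
    (∀ Kf : ℕ, Kf < M → ∀ r r' : Fin N → ℂ,
      {j | r j ≠ 0}.ncard ≤ Kf → {j | r' j ≠ 0}.ncard ≤ Kf →
      (khatriRaoConj T).mulVec r' = (khatriRaoConj T).mulVec r → r' = r) :=
  ⟨fun _ hS => khatriRaoConj_linearIndepOn hfs hMN hS, fun _ hKf _ _ hr hr' h =>
    eq_of_mulVec_eq_of_ncard_support_le
      (fun _ hS => khatriRaoConj_linearIndepOn hfs hMN (by omega)) hr hr' h⟩

/-- spark(Φ) ≥ 2M, expressed as: every set of fewer than 2M columns of Φ is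
linearly independent; together with the uniqueness of sparse solutions. -/
theorem stmt7 {M N : ℕ} (T : Matrix (Fin M) (Fin N) ℂ)
    (hM : 2 ≤ M) (hMN : M ≤ N) (hfs : FullSpark T) :
    (∀ S : Finset (Fin N), S.card < 2 * M →
      LinearIndependent ℂ (fun j : S => (khatriRaoConj T).transpose j.1)) ∧
    (∀ Kf : ℕ, Kf < M → ∀ r r' : Fin N → ℂ,
      {j | r j ≠ 0}.ncard ≤ Kf → {j | r' j ≠ 0}.ncard ≤ Kf →
      (khatriRaoConj T).mulVec r' = (khatriRaoConj T).mulVec r → r' = r) :=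
  stmt7_general T hMN hfs
end

section
/- Let Φ be an M²×N complex matrix with spark(Φ) ≥ 2M, and suppose r(f), f in some index set F, is a family of vectors in ℂ^N all supported on a common set S with |S| ≤ K_f < M. Let Q = Σ_f Φ r(f) r(f)^H Φ^H and write Q = V V^H for any matrix V whose columns span the range of Q. Then the support of the unique row-sparsest solution U of V = Φ U equals the common support of the rowspace-generating solution, i.e., the joint support S is recoverable from Q. -/
/-! Because `Q = A Aᴴ` for the matrix `A` with columns `Φ r(f)`, the column space of `Q`, hence
of `V`, is `Φ (span r)`. A solution `U` of `Φ U = V` with at most `K_f` nonzero rows and the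
common support `⋃ supp r(f)` together cover fewer than `2M ≤ spark Φ` indices, so `Φ` is
injective on vectors supported there. Thus each column of `U` equals its preimage in `span r`, and
each `r(f)` equals a combination of columns of `U`: the two supports contain each other. A
solution exists by picking preimages in `span r` column by column. -/

open Matrix Function Set Submodule

theorem support_subset_of_mem_span {ι n R M : Type*} [Semiring R] [AddCommMonoid M] [Module R M]
    {v : ι → n → M} {B : Set n} (hv : ∀ i, support (v i) ⊆ B) {x : n → M}
    (hx : x ∈ span R (range v)) : support x ⊆ B := by
  induction hx using Submodule.span_induction with
  | mem _ h => obtain ⟨i, rfl⟩ := h; exact hv i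
  | zero => simp
  | add x y _ _ hx hy => exact (support_add x y).trans (union_subset hx hy)
  | smul c x _ hx => exact (support_const_smul_subset c x).trans hx

namespace Matrix

section RowSupport

variable {n l α : Type*} [Zero α]

def rowSupport (U : Matrix n l α) : Set n := {i | ∃ j, U i j ≠ 0}

theorem rowSupport_subset_iff {U : Matrix n l α} {B : Set n} :
    U.rowSupport ⊆ B ↔ ∀ j, support (Uᵀ j) ⊆ B :=
  ⟨fun h j _ hi => h ⟨j, hi⟩, fun h _ ⟨j, hj⟩ => h j hj⟩

end RowSupport

section ColumnSpace

variable {m n l K : Type*} [Field K] [Fintype n]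

theorem span_range_transpose_mul [Fintype l] (Φ : Matrix m n K) (U : Matrix n l K) :
    span K (range (Φ * U)ᵀ) = (span K (range Uᵀ)).map Φ.mulVecLin := by
  change span K (range (Φ * U).col) = (span K (range U.col)).map Φ.mulVecLin
  rw [← range_mulVecLin, ← range_mulVecLin, mulVecLin_mul, LinearMap.range_comp]

theorem exists_mul_eq_of_span_le_map {Φ : Matrix m n K} {V : Matrix m l K}
    {W : Submodule K (n → K)} (hV : span K (range Vᵀ) ≤ W.map Φ.mulVecLin) :
    ∃ U : Matrix n l K, Φ * U = V ∧ ∀ j, Uᵀ j ∈ W := by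
  have hcol (j : l) : ∃ u ∈ W, Φ *ᵥ u = Vᵀ j := hV (subset_span ⟨j, rfl⟩)
  choose u huW hΦu using hcol
  refine ⟨(of u)ᵀ, ?_, huW⟩
  ext p j
  exact congrFun (hΦu j) p

end ColumnSpace

section StarOrderedField

variable {m n ι R : Type*} [Fintype m] [Fintype n] [Fintype ι]
  [Field R] [PartialOrder R] [StarRing R] [StarOrderedRing R]

theorem range_mulVecLin_mul_conjTranspose (A : Matrix m n R) :
    LinearMap.range (A * Aᴴ).mulVecLin = LinearMap.range A.mulVecLin := by
  refine eq_of_le_of_finrank_le ?_ (rank_self_mul_conjTranspose A).ge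
  rw [mulVecLin_mul, LinearMap.range_comp]
  exact LinearMap.map_le_range

theorem span_range_transpose_sum_vecMulVec_star (z : ι → m → R) :
    span R (range (∑ i, vecMulVec (z i) (star (z i)))ᵀ) = span R (range z) := by
  have hsum : ∑ i, vecMulVec (z i) (star (z i)) = (of z)ᵀ * (of z)ᵀᴴ := by
    ext p q
    simp [sum_apply, mul_apply, vecMulVec_apply]
  change span R (range (∑ i, vecMulVec (z i) (star (z i))).col) = span R (range (of z)ᵀ.col)
  rw [hsum, ← range_mulVecLin, ← range_mulVecLin, range_mulVecLin_mul_conjTranspose]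

end StarOrderedField

section Spark

variable {m n K : Type*} [Field K] [Fintype n]

def SparkAtLeast (Φ : Matrix m n K) (s : ℕ) : Prop :=
  ∀ T : Finset n, T.card < s → LinearIndependent K (fun j : T => Φᵀ j.1)

variable {Φ : Matrix m n K} {s : ℕ}

theorem SparkAtLeast.eq_zero_of_mulVec_eq_zero (hΦ : Φ.SparkAtLeast s) {x : n → K}
    (hx : (support x).ncard < s) (h : Φ *ᵥ x = 0) : x = 0 := by
  classical
  set T := (toFinite (support x)).toFinset
  have hsum : ∑ j : T, x j • Φᵀ j = 0 := by
    rw [Finset.sum_coe_sort T (fun j => x j • Φᵀ j),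
      Finset.sum_subset (Finset.subset_univ T) (fun j _ hj => by simp_all [T]), ← h,
      mulVec_eq_sum]
    simp only [op_smul_eq_smul]
  have hT := Fintype.linearIndependent_iff.1
    (hΦ T (by rwa [← ncard_eq_toFinset_card])) (fun j => x j) hsum
  funext j
  by_contra hj
  exact hj (hT ⟨j, (toFinite _).mem_toFinset.2 hj⟩)

theorem SparkAtLeast.eq_of_mulVec_eq (hΦ : Φ.SparkAtLeast s) {x y : n → K}
    (hxy : (support x ∪ support y).ncard < s) (h : Φ *ᵥ x = Φ *ᵥ y) : x = y :=
  sub_eq_zero.1 <| hΦ.eq_zero_of_mulVec_eq_zero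
    ((ncard_le_ncard (support_sub x y)).trans_lt hxy) (by rw [mulVec_sub, h, sub_self])

theorem SparkAtLeast.support_subset_of_mulVec_mem_map_span (hΦ : Φ.SparkAtLeast s)
    {A B : Set n} (hAB : A.ncard + B.ncard < s) {ι : Type*} {v : ι → n → K}
    (hv : ∀ i, support (v i) ⊆ B) {x : n → K} (hx : support x ⊆ A)
    (hΦx : Φ *ᵥ x ∈ (span K (range v)).map Φ.mulVecLin) : support x ⊆ B := by
  obtain ⟨w, hw, hΦw⟩ := hΦx
  have hwB := support_subset_of_mem_span hv hw
  have hxw : x = w := hΦ.eq_of_mulVec_eq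
    ((ncard_le_ncard (union_subset_union hx hwB)).trans_lt ((ncard_union_le A B).trans_lt hAB))
    hΦw.symm
  exact hxw ▸ hwB

theorem SparkAtLeast.rowSupport_eq_iUnion_support {l ι : Type*} [Fintype l]
    (hΦ : Φ.SparkAtLeast s) {k : ℕ} (hks : 2 * k < s) {r : ι → n → K}
    (hr : (⋃ i, support (r i)).ncard ≤ k)
    {U : Matrix n l K} (hU : U.rowSupport.ncard ≤ k)
    (hspan : span K (range (Φ * U)ᵀ) = (span K (range r)).map Φ.mulVecLin) :
    U.rowSupport = ⋃ i, support (r i) := by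
  rw [span_range_transpose_mul] at hspan
  have hcol := rowSupport_subset_iff.1 (subset_refl U.rowSupport)
  apply Subset.antisymm
  · refine rowSupport_subset_iff.2 fun j => hΦ.support_subset_of_mulVec_mem_map_span (by omega)
      (subset_iUnion _) (hcol j) ?_
    exact hspan ▸ mem_map_of_mem (subset_span ⟨j, rfl⟩)
  · refine iUnion_subset fun i => hΦ.support_subset_of_mulVec_mem_map_span
      (A := ⋃ i, support (r i)) (by omega) hcol
      (subset_iUnion (fun i => support (r i)) i) ?_
    exact hspan ▸ mem_map_of_mem (subset_span ⟨i, rfl⟩)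

end Spark

end Matrix

theorem stmt17_general {M N Kf L : ℕ} {F : Type*} [Fintype F]
    (Φ : Matrix (Fin M × Fin M) (Fin N) ℂ)
    (hspark : ∀ S : Finset (Fin N), S.card < 2 * M →
      LinearIndependent ℂ (fun j : S => Φ.transpose j.1))
    (r : F → Fin N → ℂ) (S : Set (Fin N))
    (hsupp : ∀ f : F, Function.support (r f) ⊆ S)
    (hS : S.ncard ≤ Kf) (hKf : Kf < M)
    (Q : Matrix (Fin M × Fin M) (Fin M × Fin M) ℂ)
    (hQ : Q = ∑ f : F,
      Matrix.of (fun p q => Φ.mulVec (r f) p * (starRingEnd ℂ) (Φ.mulVec (r f) q)))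
    (V : Matrix (Fin M × Fin M) (Fin L) ℂ)
    (hspan : Submodule.span ℂ (Set.range V.transpose) =
      Submodule.span ℂ (Set.range Q.transpose)) :
    (∃ U : Matrix (Fin N) (Fin L) ℂ, Φ * U = V ∧
      {i | ∃ l, U i l ≠ 0} = ⋃ f : F, Function.support (r f)) ∧
    (∀ U : Matrix (Fin N) (Fin L) ℂ, Φ * U = V →
      {i | ∃ l, U i l ≠ 0}.ncard ≤ Kf →
      {i | ∃ l, U i l ≠ 0} = ⋃ f : F, Function.support (r f)) := by
  have hcard : (⋃ f, support (r f)).ncard ≤ Kf :=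
    (ncard_le_ncard (iUnion_subset hsupp)).trans hS
  have hVcol : span ℂ (range Vᵀ) = (span ℂ (range r)).map Φ.mulVecLin := by
    open ComplexOrder in
    rw [hspan, hQ, map_span, ← range_comp]
    exact span_range_transpose_sum_vecMulVec_star (fun f => Φ *ᵥ r f)
  have hrow (U : Matrix (Fin N) (Fin L) ℂ) (hUV : Φ * U = V) (hU : U.rowSupport.ncard ≤ Kf) :
      U.rowSupport = ⋃ f, support (r f) :=
    SparkAtLeast.rowSupport_eq_iUnion_support hspark (by omega) hcard hU (hUV ▸ hVcol)
  obtain ⟨U, hUV, hUW⟩ := exists_mul_eq_of_span_le_map hVcol.le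
  have hU : U.rowSupport ⊆ ⋃ f, support (r f) :=
    rowSupport_subset_iff.2 fun j => support_subset_of_mem_span (subset_iUnion _) (hUW j)
  exact ⟨⟨U, hUV, hrow U hUV ((ncard_le_ncard hU).trans hcard)⟩, hrow⟩

theorem stmt17 {M N Kf L : ℕ} {F : Type*} [Fintype F]
    (Φ : Matrix (Fin M × Fin M) (Fin N) ℂ)
    (hspark : ∀ S : Finset (Fin N), S.card < 2 * M →
      LinearIndependent ℂ (fun j : S => Φ.transpose j.1))
    (r : F → Fin N → ℂ) (S : Set (Fin N))
    (hsupp : ∀ f : F, Function.support (r f) ⊆ S)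
    (hS : S.ncard ≤ Kf) (hKf : Kf < M)
    (Q : Matrix (Fin M × Fin M) (Fin M × Fin M) ℂ)
    (hQ : Q = ∑ f : F,
      Matrix.of (fun p q => Φ.mulVec (r f) p * (starRingEnd ℂ) (Φ.mulVec (r f) q)))
    (V : Matrix (Fin M × Fin M) (Fin L) ℂ)
    (hV : Q = V * V.conjTranspose)
    (hspan : Submodule.span ℂ (Set.range V.transpose) =
      Submodule.span ℂ (Set.range Q.transpose)) :
    (∃ U : Matrix (Fin N) (Fin L) ℂ, Φ * U = V ∧
      {i | ∃ l, U i l ≠ 0} = ⋃ f : F, Function.support (r f)) ∧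
    (∀ U : Matrix (Fin N) (Fin L) ℂ, Φ * U = V →
      {i | ∃ l, U i l ≠ 0}.ncard ≤ Kf →
      {i | ∃ l, U i l ≠ 0} = ⋃ f : F, Function.support (r f)) :=
  stmt17_general Φ hspark r S hsupp hS hKf Q hQ V hspan
end

section
/- Let T be an M×N complex full spark matrix with M ≤ N, and let x ∈ ℂ^N be nonzero with support of size N_z > M. Define h_i ∈ ℂ^N, 1 ≤ i ≤ M, by (h_i)_j = T_{ij} x_j. Then the h_i span an M-dimensional subspace of ℂ^N, while the null space of T̄ has dimension N − M; hence if 2M > N, not all h_i can lie in the null space of T̄. -/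
/-!
Pick `M` columns of `T` inside the support of `x`. On these columns `T * diagonal x` is an
invertible minor of `T` times an invertible diagonal matrix, so the `h i` (the rows of
`T * diagonal x`) are linearly independent and `T` has rank `M`. Conjugation preserves rank, so
rank–nullity gives `dim ker T̄ = N - M`, and `span h ≤ ker T̄` would force `M ≤ N - M`.
-/

open Matrix

namespace Matrix

variable {m n K : Type*} [Field K]

theorem linearIndependent_row_of_isUnit_submatrix [Fintype m] [DecidableEq m] {A : Matrix m n K}
    {e : m → n} (he : IsUnit (A.submatrix id e)) : LinearIndependent K A.row :=
  LinearIndependent.of_comp (LinearMap.funLeft K K e) (linearIndependent_rows_iff_isUnit.2 he)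

theorem finrank_ker_mulVecLin [Fintype n] (A : Matrix m n K) :
    Module.finrank K (LinearMap.ker A.mulVecLin) = Fintype.card n - A.rank := by
  have := LinearMap.finrank_range_add_finrank_ker A.mulVecLin
  rw [Module.finrank_fintype_fun_eq_card] at this
  rw [Matrix.rank]
  omega

theorem rank_map_star [Fintype m] [Fintype n] [StarRing K] [PartialOrder K] [StarOrderedRing K]
    (A : Matrix m n K) : (A.map star).rank = A.rank := by
  rw [← conjTranspose_transpose, rank_transpose, rank_conjTranspose]

end Matrix

variable {M N : ℕ} {T : Matrix (Fin M) (Fin N) ℂ}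

theorem FullSpark.isUnit_submatrix_orderEmbOfFin (hT : FullSpark T) {S : Finset (Fin N)}
    (hS : S.card = M) : IsUnit (T.submatrix id (S.orderEmbOfFin hS)) := by
  rw [← linearIndependent_cols_iff_isUnit]
  exact (hT S hS).comp _ (S.orderIsoOfFin hS).injective

theorem FullSpark.linearIndependent_row_mul_diagonal (hT : FullSpark T) {x : Fin N → ℂ}
    (hx : M ≤ {j | x j ≠ 0}.ncard) : LinearIndependent ℂ (T * diagonal x).row := by
  rw [Set.ncard_eq_toFinset_card'] at hx
  obtain ⟨S, hS_sub, hS⟩ := Finset.exists_subset_card_eq hx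
  set e := S.orderEmbOfFin hS
  have hxe : ∀ k, x (e k) ≠ 0 := fun k => by
    simpa using hS_sub (S.orderEmbOfFin_mem hS k)
  have hminor : (T * diagonal x).submatrix id e = T.submatrix id e * diagonal (x ∘ e) := by
    ext i k; simp
  apply linearIndependent_row_of_isUnit_submatrix (e := e)
  rw [hminor]
  exact (hT.isUnit_submatrix_orderEmbOfFin hS).mul
    (isUnit_diagonal.2 (Pi.isUnit_iff.2 fun k => (hxe k).isUnit))

theorem stmt19_general {M N : ℕ} (T : Matrix (Fin M) (Fin N) ℂ)
    (hfs : FullSpark T)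
    (x : Fin N → ℂ) (hsupp : M < {j | x j ≠ 0}.ncard)
    (h : Fin M → Fin N → ℂ) (hh : ∀ i j, h i j = T i j * x j) :
    Module.finrank ℂ (Submodule.span ℂ (Set.range h)) = M ∧
    Module.finrank ℂ (LinearMap.ker (T.map (starRingEnd ℂ)).mulVecLin) = N - M ∧
    (N < 2 * M → ¬ ∀ i : Fin M, (T.map (starRingEnd ℂ)).mulVec (h i) = 0) := by
  have hTx : h = (T * diagonal x).row := by
    ext i j; simp [hh]
  have hli := hfs.linearIndependent_row_mul_diagonal hsupp.le
  have hspan : Module.finrank ℂ (Submodule.span ℂ (Set.range h)) = M := by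
    rw [hTx, finrank_span_eq_card hli, Fintype.card_fin]
  have hrank : T.rank = M :=
    le_antisymm (rank_le_height T)
      (by simpa [hli.rank_matrix] using rank_mul_le_left T (diagonal x))
  have hker : Module.finrank ℂ (LinearMap.ker (T.map (starRingEnd ℂ)).mulVecLin) = N - M := by
    rw [finrank_ker_mulVecLin, Fintype.card_fin]
    open scoped ComplexOrder in
    exact congrArg (N - ·) ((rank_map_star T).trans hrank)
  refine ⟨hspan, hker, fun hlt hall => ?_⟩
  have := Submodule.finrank_mono (Submodule.span_le.2 (Set.range_subset_iff.2 hall) :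
    Submodule.span ℂ (Set.range h) ≤ LinearMap.ker (T.map (starRingEnd ℂ)).mulVecLin)
  omega

theorem stmt19 {M N : ℕ} (T : Matrix (Fin M) (Fin N) ℂ)
    (hMN : M ≤ N) (hfs : FullSpark T)
    (x : Fin N → ℂ) (hx : x ≠ 0) (hsupp : M < {j | x j ≠ 0}.ncard)
    (h : Fin M → Fin N → ℂ) (hh : ∀ i j, h i j = T i j * x j) :
    Module.finrank ℂ (Submodule.span ℂ (Set.range h)) = M ∧
    Module.finrank ℂ (LinearMap.ker (T.map (starRingEnd ℂ)).mulVecLin) = N - M ∧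
    (N < 2 * M → ¬ ∀ i : Fin M, (T.map (starRingEnd ℂ)).mulVec (h i) = 0) :=
  stmt19_general T hfs x hsupp h hh
end
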